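/- arXiv:1508.00041 — 2 statements merged into one kernel-verified Lean document; each statement's English description precedes it below -/
import Mathlib

section
/- Let D be a division ring and m, n positive integers. For every right submodule I of M_{m×n}(D) (an additive subgroup with I·M_n(D) ⊆ I) there exists a unique right column reduced echelon matrix C ∈ M_m(D) such that I = C·M_{m×n}(D) := {C·Y : Y ∈ M_{m×n}(D)}. -/
open Matrix Pointwise

/-- The left row space of a matrix: the span of its rows in the left `D`-module of
row vectors `Fin n → D`. -/
def LRS {D : Type*} [DivisionRing D] {ι : Type*} {n : ℕ} (A : Matrix ι (Fin n) D) :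
    Submodule D (Fin n → D) :=
  Submodule.span D (Set.range A)

/-- The right column space of a matrix: the span of its columns in the right `D`-module
(i.e. `Dᵐᵒᵖ`-module) of column vectors `Fin m → D`. -/
def RCS {D : Type*} [DivisionRing D] {ι : Type*} {m : ℕ} (A : Matrix (Fin m) ι D) :
    Submodule Dᵐᵒᵖ (Fin m → D) :=
  Submodule.span Dᵐᵒᵖ (Set.range Aᵀ)

/-- `R` is a left row reduced echelon matrix: for some `t ≤ m`, the rows with (0-based)
index `≥ t` are zero, each of the first `t` rows has first nonzero entry `1`, located in
column `k i`, the `k i` are strictly increasing, and column `k i` is zero outside row `i`. -/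
def IsRowReducedEchelon {D : Type*} [DivisionRing D] {m n : ℕ}
    (R : Matrix (Fin m) (Fin n) D) : Prop :=
  ∃ (t : ℕ) (ht : t ≤ m) (k : Fin t → Fin n),
    StrictMono k ∧
    (∀ i : Fin m, t ≤ (i : ℕ) → R i = 0) ∧
    (∀ i : Fin t, R (Fin.castLE ht i) (k i) = 1) ∧
    (∀ (i : Fin t) (j : Fin n), (j : ℕ) < (k i : ℕ) → R (Fin.castLE ht i) j = 0) ∧
    (∀ (i : Fin t) (p : Fin m), (p : ℕ) ≠ (i : ℕ) → R p (k i) = 0)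

/-- `C` is a right column reduced echelon matrix: its transpose is left row reduced
echelon (columns of `C` beyond the first `t` are zero, each of the first `t` columns has
first-from-the-top nonzero entry `1` located in row `k j`, the `k j` strictly increase,
and row `k j` is zero outside column `j`). -/
def IsColReducedEchelon {D : Type*} [DivisionRing D] {m n : ℕ}
    (C : Matrix (Fin m) (Fin n) D) : Prop :=
  IsRowReducedEchelon Cᵀ

/-- `A` is upper triangular: the `(i,j)` entry vanishes whenever `i > j`. -/
def IsUpperTriangular {D : Type*} [Zero D] {m n : ℕ} (A : Matrix (Fin m) (Fin n) D) : Prop :=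
  ∀ (i : Fin m) (j : Fin n), (j : ℕ) < (i : ℕ) → A i j = 0

/-- The index at which block `i` of the partition `M` starts. -/
def blockStart {r : ℕ} (M : Fin r → ℕ) (i : Fin r) : ℕ :=
  ∑ t ∈ Finset.Iio i, M t

theorem blockStart_add_lt {r : ℕ} (M : Fin r → ℕ) (i : Fin r) (a : Fin (M i)) :
    blockStart M i + (a : ℕ) < ∑ t, M t := by
  have h2 : (a : ℕ) < M i := a.2
  have h1 : blockStart M i + M i ≤ ∑ t, M t := by
    have hins : i ∉ Finset.Iio i := by simp
    calc blockStart M i + M i = ∑ t ∈ insert i (Finset.Iio i), M t := by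
          rw [Finset.sum_insert hins, blockStart, add_comm]
      _ ≤ ∑ t, M t := Finset.sum_le_sum_of_subset (Finset.subset_univ _)
  omega

/-- The global (row or column) index of the `a`-th entry of the `i`-th block of the
partition `M`. -/
def blockIdx {r : ℕ} (M : Fin r → ℕ) (i : Fin r) (a : Fin (M i)) : Fin (∑ t, M t) :=
  ⟨blockStart M i + (a : ℕ), blockStart_add_lt M i a⟩

/-- Membership in the nest module `T_{(M,N)}(D)`: the `(i,j)` block vanishes whenever
`i > j`. -/
def IsNest {D : Type*} [Zero D] {r s : ℕ} (M : Fin r → ℕ) (N : Fin s → ℕ)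
    (A : Matrix (Fin (∑ t, M t)) (Fin (∑ t, N t)) D) : Prop :=
  ∀ (i : Fin r) (j : Fin s) (a : Fin (M i)) (b : Fin (N j)),
    (j : ℕ) < (i : ℕ) → A (blockIdx M i a) (blockIdx N j b) = 0

/-- The `i`-th block row of a matrix whose rows are partitioned according to `M`. -/
def blockRow {D : Type*} {r n : ℕ} (M : Fin r → ℕ)
    (A : Matrix (Fin (∑ t, M t)) (Fin n) D) (i : Fin r) :
    Matrix (Fin (M i)) (Fin n) D :=
  fun a q => A (blockIdx M i a) q

/-- The `j`-th block column of a matrix whose columns are partitioned according to `N`. -/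
def blockCol {D : Type*} {s m : ℕ} (N : Fin s → ℕ)
    (A : Matrix (Fin m) (Fin (∑ t, N t)) D) (j : Fin s) :
    Matrix (Fin m) (Fin (N j)) D :=
  fun p b => A p (blockIdx N j b)

/-!
A right submodule `I` of `M_{m×n}(D)` consists exactly of the matrices whose columns lie in the
right subspace `V ⊆ D^m` of vectors whose constant-column matrix is in `I` (right
multiplication by matrix units moves columns around). As `C·M_{m×n}(D)` is the set of matrices
with columns in the column space of `C`, and `n > 0`, it suffices that every right subspace is
the column space of a unique column reduced echelon matrix. Transposing, call `j` a pivot of a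
subspace `W` if some vector of `W` has its first nonzero entry at `j`. A vector of `W`
vanishing at all pivots is zero, and by downward induction each pivot carries a vector of `W`
that vanishes before it, is `1` there and `0` at the other pivots: these are the rows of the
echelon matrix. Conversely the pivots of the row space of a reduced echelon matrix are its
pivot columns, which gives uniqueness.
-/

open MulOpposite

theorem exists_ne_zero_forall_lt_eq_zero {α M : Type*} [LinearOrder α] [WellFoundedLT α]
    [Zero M] {w : α → M} (hw : w ≠ 0) : ∃ j, w j ≠ 0 ∧ ∀ l < j, w l = 0 := by
  obtain ⟨j, hj, hmin⟩ := wellFounded_lt.has_min {j | w j ≠ 0} (Function.ne_iff.1 hw)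
  exact ⟨j, hj, fun l hl => not_not.1 fun hl' => hmin l hl' hl⟩

theorem sum_op_smul_apply {D ι κ : Type*} [DivisionRing D] (s : Finset ι) (c : ι → D)
    (v : ι → κ → D) (l : κ) :
    (∑ j ∈ s, op (c j) • v j) l = ∑ j ∈ s, v j l * c j := by
  simp [Finset.sum_apply, smul_eq_mul_unop]

theorem sum_op_smul_apply_of_apply_eq_ite {D ι : Type*} [DivisionRing D] [DecidableEq ι]
    {s : Finset ι} {c : ι → D} {v : ι → ι → D} {j' : ι} (hj' : j' ∈ s)
    (hv : ∀ j ∈ s, v j j' = if j' = j then 1 else 0) :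
    (∑ j ∈ s, op (c j) • v j) j' = c j' := by
  rw [sum_op_smul_apply, Finset.sum_eq_single_of_mem j' hj', hv j' hj', if_pos rfl, one_mul]
  intro j hj hne
  rw [hv j hj, if_neg hne.symm, zero_mul]

structure IsRowReducedEchelonWith {D : Type*} [DivisionRing D] {m n : ℕ}
    (R : Matrix (Fin m) (Fin n) D) {t : ℕ} (ht : t ≤ m) (k : Fin t → Fin n) : Prop where
  strictMono : StrictMono k
  row_eq_zero : ∀ i : Fin m, t ≤ (i : ℕ) → R i = 0
  apply_pivot : ∀ i : Fin t, R (Fin.castLE ht i) (k i) = 1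
  apply_lt_pivot : ∀ (i : Fin t) (j : Fin n), (j : ℕ) < (k i : ℕ) → R (Fin.castLE ht i) j = 0
  apply_pivot_of_ne : ∀ (i : Fin t) (p : Fin m), (p : ℕ) ≠ (i : ℕ) → R p (k i) = 0

theorem isRowReducedEchelon_iff {D : Type*} [DivisionRing D] {m n : ℕ}
    {R : Matrix (Fin m) (Fin n) D} :
    IsRowReducedEchelon R ↔
      ∃ (t : ℕ) (ht : t ≤ m) (k : Fin t → Fin n), IsRowReducedEchelonWith R ht k :=
  ⟨fun ⟨t, ht, k, h₁, h₂, h₃, h₄, h₅⟩ => ⟨t, ht, k, ⟨h₁, h₂, h₃, h₄, h₅⟩⟩,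
    fun ⟨t, ht, k, ⟨h₁, h₂, h₃, h₄, h₅⟩⟩ => ⟨t, ht, k, h₁, h₂, h₃, h₄, h₅⟩⟩

section Pivots

variable {D : Type*} [DivisionRing D] {m : ℕ}

open Classical in
noncomputable def Submodule.pivots (W : Submodule Dᵐᵒᵖ (Fin m → D)) : Finset (Fin m) :=
  {j | ∃ w ∈ W, w j ≠ 0 ∧ ∀ l < j, w l = 0}

namespace Submodule

variable {W : Submodule Dᵐᵒᵖ (Fin m → D)}

theorem mem_pivots {j : Fin m} : j ∈ W.pivots ↔ ∃ w ∈ W, w j ≠ 0 ∧ ∀ l < j, w l = 0 := by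
  simp [pivots]

theorem eq_zero_of_forall_pivots_eq_zero {w : Fin m → D} (hw : w ∈ W)
    (h : ∀ j ∈ W.pivots, w j = 0) : w = 0 := by
  by_contra hne
  obtain ⟨j, hj, hlow⟩ := exists_ne_zero_forall_lt_eq_zero hne
  exact hj (h j (mem_pivots.2 ⟨w, hw, hj, hlow⟩))

theorem exists_mem_apply_pivots_eq_ite {j : Fin m} (hj : j ∈ W.pivots) :
    ∃ v ∈ W, (∀ l < j, v l = 0) ∧ ∀ j' ∈ W.pivots, v j' = if j' = j then 1 else 0 := by
  classical
  induction j using WellFoundedGT.induction with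
  | ind j ih =>
  choose! v hvW hvlow hvpiv using ih
  obtain ⟨u₀, hu₀W, hu₀j, hu₀low⟩ := mem_pivots.1 hj
  set u := op (u₀ j)⁻¹ • u₀
  have huj : u j = 1 := by simp [u, smul_eq_mul_unop, mul_inv_cancel₀ hu₀j]
  have hulow : ∀ l < j, u l = 0 := fun l hl => by simp [u, hu₀low l hl]
  -- Clear the entries of a normalised witness `u` at the later pivots using the vectors
  -- already obtained there; these vanish up to `j`, so nothing changes at or before `j`.
  set later := W.pivots.filter (j < ·)
  have mem_later {j'} : j' ∈ later ↔ j' ∈ W.pivots ∧ j < j' := Finset.mem_filter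
  have hvlow' : ∀ l ≤ j, ∑ j' ∈ later, v j' l * u j' = 0 := fun l hl =>
    Finset.sum_eq_zero fun j' hj' => by
      rw [hvlow j' (mem_later.1 hj').2 (mem_later.1 hj').1 l (hl.trans_lt (mem_later.1 hj').2),
        zero_mul]
  refine ⟨u - ∑ j' ∈ later, op (u j') • v j', ?_, fun l hl => ?_, fun j' hj' => ?_⟩
  · exact W.sub_mem (W.smul_mem _ hu₀W) (W.sum_mem fun j' hj' =>
      W.smul_mem _ (hvW j' (mem_later.1 hj').2 (mem_later.1 hj').1))
  · rw [Pi.sub_apply, sum_op_smul_apply, hulow l hl, hvlow' l hl.le, sub_zero]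
  rw [Pi.sub_apply, sum_op_smul_apply]
  rcases lt_trichotomy j' j with hlt | rfl | hgt
  · rw [hulow j' hlt, hvlow' j' hlt.le, if_neg hlt.ne, sub_zero]
  · rw [huj, hvlow' j' le_rfl, if_pos rfl, sub_zero]
  · rw [← sum_op_smul_apply, sum_op_smul_apply_of_apply_eq_ite (mem_later.2 ⟨hj', hgt⟩)
      fun j'' hj'' => hvpiv j'' (mem_later.1 hj'').2 (mem_later.1 hj'').1 j' hj',
      sub_self, if_neg hgt.ne']

theorem exists_isRowReducedEchelon_span_eq (W : Submodule Dᵐᵒᵖ (Fin m → D)) :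
    ∃ R : Matrix (Fin m) (Fin m) D, IsRowReducedEchelon R ∧ span Dᵐᵒᵖ (Set.range R) = W := by
  classical
  choose! v hvW hvlow hvpiv using fun j (hj : j ∈ W.pivots) => exists_mem_apply_pivots_eq_ite hj
  set t := W.pivots.card
  have ht : t ≤ m := by simpa using W.pivots.card_le_univ
  set k := W.pivots.orderEmbOfFin rfl
  have hk : ∀ i, k i ∈ W.pivots := W.pivots.orderEmbOfFin_mem rfl
  let R : Matrix (Fin m) (Fin m) D := fun p => if h : (p : ℕ) < t then v (k ⟨p, h⟩) else 0
  have hR : ∀ i : Fin t, R (Fin.castLE ht i) = v (k i) := fun i => dif_pos i.2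
  have hRW : ∀ p, R p ∈ W := fun p => by
    unfold R
    split_ifs
    exacts [hvW _ (hk _), W.zero_mem]
  refine ⟨R, isRowReducedEchelon_iff.2 ⟨t, ht, k, ⟨k.strictMono,
    fun p hp => dif_neg (not_lt.2 hp), fun i => ?_, fun i j hj => ?_, fun i p hp => ?_⟩⟩, ?_⟩
  · rw [hR, hvpiv _ (hk i) _ (hk i), if_pos rfl]
  · rw [hR]
    exact hvlow _ (hk i) j hj
  · by_cases h : (p : ℕ) < t
    · rw [show R p = v (k ⟨p, h⟩) from dif_pos h, hvpiv _ (hk _) _ (hk i),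
        if_neg (k.injective.ne (Fin.ne_of_val_ne (Ne.symm hp)))]
    · rw [show R p = 0 from dif_neg h]
      rfl
  · refine le_antisymm (span_le.2 (Set.range_subset_iff.2 hRW)) fun w hw => ?_
    have hsum : w = ∑ j ∈ W.pivots, op (w j) • v j := by
      rw [← sub_eq_zero]
      refine eq_zero_of_forall_pivots_eq_zero
        (W.sub_mem hw (W.sum_mem fun j hj => W.smul_mem _ (hvW j hj))) fun j' hj' => ?_
      rw [Pi.sub_apply, sum_op_smul_apply_of_apply_eq_ite hj' fun j hj => hvpiv j hj j' hj',
        sub_self]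
    rw [hsum]
    refine sum_mem fun j hj => smul_mem _ _ (subset_span ?_)
    obtain ⟨i, rfl⟩ : j ∈ Set.range k := by
      rw [Finset.range_orderEmbOfFin]
      exact hj
    exact ⟨_, hR i⟩

end Submodule
end Pivots

namespace IsRowReducedEchelonWith

variable {D : Type*} [DivisionRing D] {m : ℕ} {R : Matrix (Fin m) (Fin m) D} {t : ℕ}
  {ht : t ≤ m} {k : Fin t → Fin m}

theorem sum_smul_apply_pivot (h : IsRowReducedEchelonWith R ht k) (c : Fin m → Dᵐᵒᵖ)
    (i : Fin t) :
    (∑ p, c p • R p) (k i) = unop (c (Fin.castLE ht i)) := by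
  rw [Finset.sum_apply, Finset.sum_eq_single (Fin.castLE ht i)]
  · simp [smul_eq_mul_unop, h.apply_pivot i]
  · intro p _ hp
    simp [h.apply_pivot_of_ne i p fun hpi => hp (Fin.ext hpi)]
  · simp

theorem pivots_span_eq (h : IsRowReducedEchelonWith R ht k) :
    (Submodule.span Dᵐᵒᵖ (Set.range R)).pivots = Finset.univ.image k := by
  ext j
  refine ⟨fun hj => ?_, fun hj => ?_⟩
  · obtain ⟨w, hw, hwj, hlow⟩ := Submodule.mem_pivots.1 hj
    obtain ⟨c, rfl⟩ := (Submodule.mem_span_range_iff_exists_fun Dᵐᵒᵖ).1 hw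
    by_contra hjk
    refine hwj ((Finset.sum_apply _ _ _).trans (Finset.sum_eq_zero fun p _ => ?_))
    rw [Pi.smul_apply, smul_eq_mul_unop]
    by_cases hp : (p : ℕ) < t
    · obtain ⟨i, rfl⟩ : ∃ i : Fin t, Fin.castLE ht i = p := ⟨⟨p, hp⟩, rfl⟩
      rcases lt_trichotomy (k i) j with hlt | heq | hgt
      · rw [← h.sum_smul_apply_pivot, hlow _ hlt, mul_zero]
      · exact absurd (Finset.mem_image.2 ⟨_, Finset.mem_univ _, heq⟩) hjk
      · rw [h.apply_lt_pivot _ j hgt, zero_mul]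
    · rw [h.row_eq_zero p (not_lt.1 hp), Pi.zero_apply, zero_mul]
  · obtain ⟨i, -, rfl⟩ := Finset.mem_image.1 hj
    refine Submodule.mem_pivots.2 ⟨R (Fin.castLE ht i), Submodule.subset_span ⟨_, rfl⟩, ?_,
      h.apply_lt_pivot i⟩
    rw [h.apply_pivot i]
    exact one_ne_zero

end IsRowReducedEchelonWith

theorem IsRowReducedEchelon.eq_of_span_eq {D : Type*} [DivisionRing D] {m : ℕ}
    {R R' : Matrix (Fin m) (Fin m) D} (hR : IsRowReducedEchelon R)
    (hR' : IsRowReducedEchelon R')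
    (hspan : Submodule.span Dᵐᵒᵖ (Set.range R) = Submodule.span Dᵐᵒᵖ (Set.range R')) :
    R = R' := by
  obtain ⟨t, ht, k, h⟩ := isRowReducedEchelon_iff.1 hR
  obtain ⟨t', ht', k', h'⟩ := isRowReducedEchelon_iff.1 hR'
  have himage : Finset.univ.image k = Finset.univ.image k' := by
    rw [← h.pivots_span_eq, ← h'.pivots_span_eq, hspan]
  obtain rfl : t = t' := by
    simpa [Finset.card_image_of_injective _ h.strictMono.injective,
      Finset.card_image_of_injective _ h'.strictMono.injective] using congrArg Finset.card himage
  obtain rfl : k = k' := (h.strictMono.range_inj h'.strictMono).1 (by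
    simpa using congrArg (fun s : Finset (Fin m) => (s : Set (Fin m))) himage)
  funext p
  rw [← sub_eq_zero]
  refine Submodule.eq_zero_of_forall_pivots_eq_zero (W := Submodule.span Dᵐᵒᵖ (Set.range R))
    (sub_mem (Submodule.subset_span ⟨p, rfl⟩) (hspan ▸ Submodule.subset_span ⟨p, rfl⟩))
    fun j hj => ?_
  rw [h.pivots_span_eq] at hj
  obtain ⟨i, -, rfl⟩ := Finset.mem_image.1 hj
  rw [Pi.sub_apply, sub_eq_zero]
  by_cases hpi : (p : ℕ) = i
  · obtain rfl : p = Fin.castLE ht i := Fin.ext hpi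
    rw [h.apply_pivot, h'.apply_pivot]
  · rw [h.apply_pivot_of_ne i p hpi, h'.apply_pivot_of_ne i p hpi]

theorem Submodule.existsUnique_isColReducedEchelon_RCS_eq {D : Type*} [DivisionRing D] {m : ℕ}
    (W : Submodule Dᵐᵒᵖ (Fin m → D)) :
    ∃! C : Matrix (Fin m) (Fin m) D, IsColReducedEchelon C ∧ RCS C = W := by
  obtain ⟨R, hR, hspan⟩ := W.exists_isRowReducedEchelon_span_eq
  refine ⟨Rᵀ, ⟨by rwa [IsColReducedEchelon, transpose_transpose],
    by rwa [RCS, transpose_transpose]⟩, fun C ⟨hC, hCW⟩ => ?_⟩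
  rw [← transpose_transpose C, hC.eq_of_span_eq hR (hCW.trans hspan.symm)]

section ColumnSpace

variable {D : Type*} [DivisionRing D] {m : ℕ} {ν : Type*}

def matricesWithColsIn (ν : Type*) (W : Submodule Dᵐᵒᵖ (Fin m → D)) :
    Set (Matrix (Fin m) ν D) :=
  {A | ∀ q, Aᵀ q ∈ W}

theorem replicateCol_mem_matricesWithColsIn [Nonempty ν] {W : Submodule Dᵐᵒᵖ (Fin m → D)}
    {v : Fin m → D} : replicateCol ν v ∈ matricesWithColsIn ν W ↔ v ∈ W :=
  ⟨fun h => h (Classical.arbitrary ν), fun h _ => h⟩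

theorem matricesWithColsIn_injective [Nonempty ν] :
    Function.Injective (matricesWithColsIn (D := D) (m := m) ν) := by
  intro W W' h
  ext v
  rw [← replicateCol_mem_matricesWithColsIn (ν := ν), h, replicateCol_mem_matricesWithColsIn]

theorem mem_RCS_iff {ι : Type*} [Fintype ι] {C : Matrix (Fin m) ι D} {v : Fin m → D} :
    v ∈ RCS C ↔ ∃ x, C *ᵥ x = v := by
  refine (Submodule.mem_span_range_iff_exists_fun Dᵐᵒᵖ).trans ?_
  simp only [mulVec_eq_sum]
  exact ⟨fun ⟨c, hc⟩ => ⟨unop ∘ c, by simpa using hc⟩, fun ⟨x, hx⟩ => ⟨op ∘ x, hx⟩⟩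

theorem range_mul_eq_matricesWithColsIn {ι : Type*} [Fintype ι] (C : Matrix (Fin m) ι D) :
    Set.range (fun Y : Matrix ι ν D => C * Y) = matricesWithColsIn ν (RCS C) := by
  ext A
  simp only [Set.mem_range, matricesWithColsIn, mem_RCS_iff]
  constructor
  · rintro ⟨Y, rfl⟩ q
    exact ⟨Yᵀ q, rfl⟩
  · intro h
    choose x hx using h
    exact ⟨(Matrix.of x)ᵀ, by ext p q; exact congrFun (hx q) p⟩

variable [Fintype ν] [DecidableEq ν]

def AddSubgroup.colSpace (I : AddSubgroup (Matrix (Fin m) ν D))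
    (hI : ∀ (A : Matrix (Fin m) ν D) (Q : Matrix ν ν D), A ∈ I → A * Q ∈ I) :
    Submodule Dᵐᵒᵖ (Fin m → D) where
  carrier := {v | replicateCol ν v ∈ I}
  add_mem' {v w} hv hw := by
    change replicateCol ν (v + w) ∈ I
    exact replicateCol_add v w ▸ I.add_mem hv hw
  zero_mem' := by
    change replicateCol ν 0 ∈ I
    exact replicateCol_zero (m := Fin m) (α := D) ▸ I.zero_mem
  smul_mem' c v hv := by
    have : replicateCol ν (c • v) =
        replicateCol ν v * (diagonal fun _ => unop c : Matrix ν ν D) := by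
      ext i j
      rw [mul_diagonal]
      simp [smul_eq_mul_unop]
    change replicateCol ν (c • v) ∈ I
    exact this ▸ hI _ _ hv

theorem AddSubgroup.coe_eq_matricesWithColsIn_colSpace {I : AddSubgroup (Matrix (Fin m) ν D)}
    (hI : ∀ (A : Matrix (Fin m) ν D) (Q : Matrix ν ν D), A ∈ I → A * Q ∈ I) :
    (I : Set (Matrix (Fin m) ν D)) = matricesWithColsIn ν (I.colSpace hI) := by
  ext A
  constructor
  · intro hA q
    have : replicateCol ν (Aᵀ q) = A * (replicateCol ν (Pi.single q 1) : Matrix ν ν D) := by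
      rw [← replicateCol_mulVec, mulVec_single_one]; rfl
    change replicateCol ν (Aᵀ q) ∈ I
    exact this ▸ hI _ _ hA
  · intro hA
    have : A = ∑ q, replicateCol ν (Aᵀ q) * (diagonal (Pi.single q 1) : Matrix ν ν D) := by
      ext p r; simp [Matrix.sum_apply, mul_diagonal, Pi.single_apply]
    rw [SetLike.mem_coe, this]
    exact I.sum_mem fun q _ => hI _ _ (hA q)

end ColumnSpace

theorem exists_unique_colReducedEchelon_of_rightSubmodule_general
    (D : Type*) [DivisionRing D] (m n : ℕ) (hn : 0 < n)
    (I : AddSubgroup (Matrix (Fin m) (Fin n) D))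
    (hI : ∀ (A : Matrix (Fin m) (Fin n) D) (Q : Matrix (Fin n) (Fin n) D),
      A ∈ I → A * Q ∈ I) :
    ∃! C : Matrix (Fin m) (Fin m) D, IsColReducedEchelon C ∧
      (I : Set (Matrix (Fin m) (Fin n) D)) =
        Set.range (fun Y : Matrix (Fin m) (Fin n) D => C * Y) := by
  have : Nonempty (Fin n) := ⟨⟨0, hn⟩⟩
  refine (existsUnique_congr fun C => and_congr_right' ?_).1
    (I.colSpace hI).existsUnique_isColReducedEchelon_RCS_eq
  rw [range_mul_eq_matricesWithColsIn, AddSubgroup.coe_eq_matricesWithColsIn_colSpace hI,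
    matricesWithColsIn_injective.eq_iff, eq_comm]

/-- Every right submodule `I` of `M_{m×n}(D)` is of the form
`C·M_{m×n}(D)` for a unique right column reduced echelon matrix `C ∈ M_m(D)`. -/
theorem exists_unique_colReducedEchelon_of_rightSubmodule
    (D : Type*) [DivisionRing D] (m n : ℕ) (hm : 0 < m) (hn : 0 < n)
    (I : AddSubgroup (Matrix (Fin m) (Fin n) D))
    (hI : ∀ (A : Matrix (Fin m) (Fin n) D) (Q : Matrix (Fin n) (Fin n) D),
      A ∈ I → A * Q ∈ I) :
    ∃! C : Matrix (Fin m) (Fin m) D, IsColReducedEchelon C ∧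
      (I : Set (Matrix (Fin m) (Fin n) D)) =
        Set.range (fun Y : Matrix (Fin m) (Fin n) D => C * Y) :=
  exists_unique_colReducedEchelon_of_rightSubmodule_general D m n hn I hI
end

section
/- Let D be a division ring, M = (m_1,…,m_r), N = (n_1,…,n_s) partitions of m and n, and J a nonzero left submodule of T_{(M,N)}(D) with associated unique sequence (R_1,…,R_r) of left row reduced echelon matrices. Let 1 ≤ k ≤ r be the largest index with R_k ≠ 0, and set R_{k+1} := 0 if k = r. Then J is principal as a left submodule (i.e., J = T_M·A := {P·A : P ∈ T_M} for some A ∈ T_{(M,N)}(D)) if and only if rank(R_i) − rank(R_{i+1}) ≤ m_i for every 1 ≤ i ≤ k. -/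
open Matrix Pointwise

/-!
Label every row index by its block. For `A ∈ T_{(M,N)}(D)` the orbit `T_M·A` consists of the
matrices whose rows in block `i` lie in `V_i(A)`, the span of the rows of `A` in blocks `≥ i`,
while `J` consists of those whose rows in block `i` lie in `LRS(R_i)`. Testing with matrices
having a single nonzero row, placed in block `i`, shows that `J = T_M·A` exactly when
`V_i(A) = LRS(R_i)` for all `i`. Since `V_i(A)` is spanned by the `m_i` rows of block `i`
together with `V_{i+1}(A)`, this forces `rank R_i - rank R_{i+1} ≤ m_i`. Conversely, filling
block `i` with a spanning family of a complement of `LRS(R_{i+1})` in `LRS(R_i)`, padded with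
zero rows, gives a generator, by downward induction on `i`.
-/

open Module Set

section LinearAlgebra

variable {D V : Type*} [DivisionRing D] [AddCommGroup V] [Module D V]

theorem Submodule.exists_span_range_eq_of_finrank_le {κ : Type*} [Finite κ]
    (C : Submodule D V) [FiniteDimensional D C] (h : finrank D C ≤ Nat.card κ) :
    ∃ f : κ → V, Submodule.span D (range f) = C := by
  have := Fintype.ofFinite κ
  obtain ⟨e⟩ := Function.Embedding.nonempty_of_card_le (α := Fin (finrank D C)) (β := κ)
    (by rwa [Fintype.card_fin, ← Nat.card_eq_fintype_card])
  let b := Module.finBasis D C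
  refine ⟨Function.extend e (fun a => (b a : V)) 0, ?_⟩
  have hzero : Submodule.span D ((0 : κ → V) '' (range e)ᶜ) = ⊥ :=
    Submodule.span_eq_bot.mpr (by rintro _ ⟨_, _, rfl⟩; rfl)
  rw [range_extend e.injective, Submodule.span_union, hzero, sup_bot_eq,
    range_comp' Subtype.val b, ← Submodule.coe_subtype, Submodule.span_image, b.span_eq,
    Submodule.map_subtype_top]

theorem Submodule.exists_sup_span_range_eq [FiniteDimensional D V] {W U : Submodule D V}
    (hWU : W ≤ U) {κ : Type*} [Finite κ] (h : finrank D U - finrank D W ≤ Nat.card κ) :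
    ∃ f : κ → V, W ⊔ Submodule.span D (range f) = U := by
  obtain ⟨C', hC'⟩ := W.exists_isCompl
  have hsup : W ⊔ C' ⊓ U = U := by rw [← sup_inf_assoc_of_le _ hWU, hC'.sup_eq_top, top_inf_eq]
  have hinf : W ⊓ (C' ⊓ U) = ⊥ := eq_bot_iff.mpr (hC'.inf_eq_bot ▸ inf_le_inf_left _ inf_le_left)
  have hrank := Submodule.finrank_sup_add_finrank_inf_eq W (C' ⊓ U)
  rw [hsup, hinf, finrank_bot] at hrank
  obtain ⟨f, hf⟩ := (C' ⊓ U).exists_span_range_eq_of_finrank_le (κ := κ) (by omega)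
  exact ⟨f, hf ▸ hsup⟩

end LinearAlgebra

section TailSpan

variable (D : Type*) {V ι β : Type*} [DivisionRing D] [AddCommGroup V] [Module D V]
  [LinearOrder β] (lev : ι → β)

-- `lev` assigns each row its block; below, `⨆ c > b, L c` plays the role of `L_{b+1}`.
def tailSpan (v : ι → V) (b : β) : Submodule D V :=
  Submodule.span D (v '' {q | b ≤ lev q})

variable {D lev}

theorem tailSpan_eq_span_sup_iSup (v : ι → V) (b : β) :
    tailSpan D lev v b = Submodule.span D (v '' (lev ⁻¹' {b})) ⊔ ⨆ c > b, tailSpan D lev v c := by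
  have hsplit : {q | b ≤ lev q} = lev ⁻¹' {b} ∪ ⋃ c > b, {q | c ≤ lev q} := by
    ext q
    simp only [mem_ofPred_eq, mem_union, mem_preimage, mem_singleton_iff, mem_iUnion,
      exists_prop]
    exact ⟨fun h => h.eq_or_lt.imp Eq.symm fun h => ⟨lev q, h, le_rfl⟩,
      by rintro (h | ⟨c, hbc, hc⟩) <;> [exact h.ge; exact (hbc.trans_le hc).le]⟩
  rw [tailSpan, hsplit, image_union, Submodule.span_union, image_iUnion₂,
    Submodule.span_iUnion₂]
  rfl

variable [FiniteDimensional D V] [Finite ι]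

theorem finrank_sub_finrank_iSup_le_card {L : β → Submodule D V} {v : ι → V}
    (hv : ∀ b, tailSpan D lev v b = L b) (b : β) :
    finrank D (L b) - finrank D (⨆ c > b, L c : Submodule D V) ≤ Nat.card (lev ⁻¹' {b}) := by
  have hsplit : L b = Submodule.span D (v '' (lev ⁻¹' {b})) ⊔ ⨆ c > b, L c := by
    simp_rw [← hv, ← tailSpan_eq_span_sup_iSup]
  have := Fintype.ofFinite (lev ⁻¹' {b})
  have hblock : finrank D (Submodule.span D (v '' (lev ⁻¹' {b}))) ≤ Nat.card (lev ⁻¹' {b}) := by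
    rw [image_eq_range, Nat.card_eq_fintype_card]
    exact finrank_range_le_card _
  have := Submodule.finrank_add_le_finrank_add_finrank (Submodule.span D (v '' (lev ⁻¹' {b})))
    (⨆ c > b, L c)
  rw [← hsplit] at this
  omega

theorem exists_tailSpan_eq_of_finrank_sub_le [WellFoundedGT β] {L : β → Submodule D V}
    (hL : Antitone L)
    (h : ∀ b, finrank D (L b) - finrank D (⨆ c > b, L c : Submodule D V) ≤ Nat.card (lev ⁻¹' {b})) :
    ∃ v : ι → V, ∀ b, tailSpan D lev v b = L b := by
  choose f hf using fun b => Submodule.exists_sup_span_range_eq (κ := lev ⁻¹' {b})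
    (iSup₂_le fun c hc => hL hc.le : ⨆ c > b, L c ≤ L b) (h b)
  refine ⟨fun q => f (lev q) ⟨q, rfl⟩, fun b => ?_⟩
  induction b using WellFoundedGT.induction with
  | _ b ih =>
    have hblock : (fun q => f (lev q) ⟨q, rfl⟩) '' (lev ⁻¹' {b}) = range (f b) := by
      ext x
      constructor
      · rintro ⟨q, rfl : lev q = b, rfl⟩
        exact ⟨_, rfl⟩
      · rintro ⟨⟨q, hq : lev q = b⟩, rfl⟩
        subst hq
        exact ⟨q, rfl, rfl⟩
    rw [tailSpan_eq_span_sup_iSup, hblock, ← hf b, sup_comm]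
    congr 1
    exact iSup_congr fun c => iSup_congr (ih c)

theorem exists_tailSpan_eq_iff [WellFoundedGT β] {L : β → Submodule D V} (hL : Antitone L) :
    (∃ v : ι → V, ∀ b, tailSpan D lev v b = L b) ↔
      ∀ b, finrank D (L b) - finrank D (⨆ c > b, L c : Submodule D V) ≤ Nat.card (lev ⁻¹' {b}) :=
  ⟨fun ⟨_, hv⟩ => finrank_sub_finrank_iSup_le_card hv, exists_tailSpan_eq_of_finrank_sub_le hL⟩

end TailSpan

section BlockTriangular

variable {D ι κ β : Type*} [DivisionRing D] [Fintype ι] [LinearOrder β] {lev : ι → β}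

theorem exists_blockTriangular_mul_eq_iff (A B : Matrix ι κ D) :
    (∃ P : Matrix ι ι D, P.BlockTriangular lev ∧ B = P * A) ↔
      ∀ p, B p ∈ tailSpan D lev A (lev p) := by
  constructor
  · rintro ⟨P, hP, rfl⟩ p
    rw [mul_apply_eq_vecMul, vecMul_eq_sum]
    refine Submodule.sum_mem _ fun q _ => ?_
    by_cases hpq : lev p ≤ lev q
    · exact Submodule.smul_mem _ _ (Submodule.subset_span ⟨q, hpq, rfl⟩)
    · rw [hP (not_le.mp hpq), zero_smul]
      exact Submodule.zero_mem _
  · intro hB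
    choose c hc hcB using fun p => (Finsupp.mem_span_image_iff_linearCombination D).mp (hB p)
    refine ⟨Matrix.of fun p q => c p q, fun p q hqp => ?_, ?_⟩
    · exact (Finsupp.mem_supported' D (c p)).mp (hc p) q (not_le.mpr hqp)
    · funext p
      rw [mul_apply_eq_vecMul, vecMul_eq_sum, ← hcB p]
      exact (Finsupp.linearCombination_apply D (c p)).trans
        (Finsupp.sum_fintype _ _ fun _ => zero_smul D _)

theorem setOf_forall_mem_eq_iff_tailSpan_eq (hlev : Function.Surjective lev)
    {L : β → Submodule D (κ → D)} (hL : Antitone L) (A : Matrix ι κ D) :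
    {B : Matrix ι κ D | ∀ p, B p ∈ L (lev p)} =
        {B | ∃ P : Matrix ι ι D, P.BlockTriangular lev ∧ B = P * A} ↔
      ∀ b, tailSpan D lev A b = L b := by
  classical
  simp_rw [exists_blockTriangular_mul_eq_iff]
  refine ⟨fun hEq b => le_antisymm ?_ fun w hw => ?_, fun h => by simp_rw [h]⟩
  · have hA : A ∈ {B : Matrix ι κ D | ∀ p, B p ∈ L (lev p)} :=
      hEq ▸ fun p => Submodule.subset_span ⟨p, le_rfl, rfl⟩
    exact Submodule.span_le.mpr fun _ ⟨q, hq, hAq⟩ => hAq ▸ hL hq (hA q)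
  · obtain ⟨p, rfl⟩ := hlev b
    have hsingle : (Pi.single p w : Matrix ι κ D) ∈ {B : Matrix ι κ D | ∀ p, B p ∈ L (lev p)} := by
      intro q
      rcases eq_or_ne q p with rfl | hqp
      · simpa using hw
      · simp [hqp]
    rw [hEq] at hsingle
    simpa using hsingle p

end BlockTriangular

theorem Fin.antitone_of_succ_le {α : Type*} [Preorder α] {r : ℕ} {f : Fin r → α}
    (h : ∀ (i : Fin r) (hi : (i : ℕ) + 1 < r), f ⟨i + 1, hi⟩ ≤ f i) : Antitone f := by
  cases r with
  | zero => exact fun i => i.elim0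
  | succ r => exact Fin.antitone_iff_succ_le.mpr fun i => h i.castSucc (by simp)

theorem Fin.iSup_gt_eq_dite {α : Type*} [CompleteLattice α] {r : ℕ} {f : Fin r → α}
    (hf : Antitone f) (i : Fin r) :
    ⨆ j > i, f j = if hi : (i : ℕ) + 1 < r then f ⟨i + 1, hi⟩ else ⊥ := by
  split_ifs with hi
  · refine le_antisymm (iSup₂_le fun j hj => hf ?_) (le_iSup₂_of_le ⟨i + 1, hi⟩ ?_ le_rfl)
    · exact Fin.le_def.mpr (Fin.lt_def.mp hj)
    · exact Fin.lt_def.mpr (Nat.lt_succ_self _)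
  · exact iSup₂_eq_bot.mpr fun j hj => absurd (Fin.lt_def.mp hj) (by omega)

section RowSpace

variable {D ι : Type*} [DivisionRing D] {n : ℕ}

theorem exists_mul_eq_iff_forall_mem_LRS [Fintype ι] {α : Type*} (B : Matrix α (Fin n) D)
    (R : Matrix ι (Fin n) D) : (∃ X : Matrix α ι D, B = X * R) ↔ ∀ a, B a ∈ LRS R := by
  have hmem (v : Fin n → D) : v ∈ LRS R ↔ ∃ c : ι → D, ∑ p, c p • R p = v :=
    Submodule.mem_span_range_iff_exists_fun D
  simp only [hmem]
  constructor
  · rintro ⟨X, rfl⟩ a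
    exact ⟨X a, by rw [mul_apply_eq_vecMul, vecMul_eq_sum]⟩
  · intro h
    choose c hc using h
    refine ⟨Matrix.of c, Matrix.ext fun a q => ?_⟩
    simp [← hc a, mul_apply, Finset.sum_apply]

theorem LRS_zero : LRS (0 : Matrix ι (Fin n) D) = ⊥ :=
  Submodule.span_eq_bot.mpr (by rintro _ ⟨_, rfl⟩; rfl)

theorem apply_eq_zero_of_mem_LRS {R : Matrix ι (Fin n) D} {q : Fin n} (hR : ∀ p, R p q = 0)
    {v : Fin n → D} (hv : v ∈ LRS R) : v q = 0 := by
  have : LRS R ≤ LinearMap.ker (LinearMap.proj q : (Fin n → D) →ₗ[D] D) :=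
    Submodule.span_le.mpr (by rintro _ ⟨p, rfl⟩; exact hR p)
  exact this hv

end RowSpace

section Blocks

variable {r : ℕ} (M : Fin r → ℕ)

theorem blockIdx_eq_finSigmaFinEquiv (i : Fin r) (a : Fin (M i)) :
    blockIdx M i a = finSigmaFinEquiv ⟨i, a⟩ := by
  have hIio : Finset.Iio i = Finset.univ.map (Fin.castLEEmb i.2.le) := by
    ext t
    simp only [Finset.mem_Iio, Finset.mem_map, Finset.mem_univ, true_and, Fin.castLEEmb_apply]
    exact ⟨fun h => ⟨⟨t, h⟩, rfl⟩, by rintro ⟨x, rfl⟩; exact x.2⟩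
  ext
  rw [finSigmaFinEquiv_apply]
  simp only [blockIdx, blockStart, hIio, Finset.sum_map]
  rfl

theorem exists_blockIdx_eq (p : Fin (∑ t, M t)) : ∃ i a, blockIdx M i a = p := by
  obtain ⟨⟨i, a⟩, rfl⟩ := finSigmaFinEquiv.surjective p
  exact ⟨i, a, blockIdx_eq_finSigmaFinEquiv M i a⟩

def blockOf (p : Fin (∑ t, M t)) : Fin r :=
  (finSigmaFinEquiv.symm p).1

theorem blockOf_blockIdx (i : Fin r) (a : Fin (M i)) : blockOf M (blockIdx M i a) = i := by
  rw [blockOf, blockIdx_eq_finSigmaFinEquiv, Equiv.symm_apply_apply]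

theorem blockOf_surjective (hM : ∀ i, 0 < M i) : Function.Surjective (blockOf M) :=
  fun i => ⟨_, blockOf_blockIdx M i ⟨0, hM i⟩⟩

theorem natCard_preimage_blockOf (i : Fin r) : Nat.card (blockOf M ⁻¹' {i}) = M i :=
  (Nat.card_congr ((finSigmaFinEquiv.symm.subtypeEquiv fun _ => Iff.rfl).trans
    (Equiv.sigmaSubtype i))).trans (Nat.card_fin _)

variable {M}

theorem isNest_iff_blockTriangular {D : Type*} [Zero D]
    (P : Matrix (Fin (∑ t, M t)) (Fin (∑ t, M t)) D) :
    IsNest M M P ↔ P.BlockTriangular (blockOf M) := by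
  constructor
  · intro h p q hqp
    obtain ⟨i, a, rfl⟩ := exists_blockIdx_eq M p
    obtain ⟨j, b, rfl⟩ := exists_blockIdx_eq M q
    rw [blockOf_blockIdx, blockOf_blockIdx] at hqp
    exact h i j a b hqp
  · intro h i j a b hji
    exact h (by rwa [blockOf_blockIdx, blockOf_blockIdx])

theorem setOf_forall_blockRow_eq_mul_eq {D ι : Type*} [DivisionRing D] [Fintype ι] {n : ℕ}
    (R : Fin r → Matrix ι (Fin n) D) :
    {A : Matrix (Fin (∑ t, M t)) (Fin n) D | ∀ i, ∃ X : Matrix (Fin (M i)) ι D,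
        blockRow M A i = X * R i} =
      {A | ∀ p, A p ∈ LRS (R (blockOf M p))} := by
  ext A
  simp only [Set.mem_ofPred_eq, exists_mul_eq_iff_forall_mem_LRS]
  refine ⟨fun h p => ?_, fun h i a => ?_⟩
  · obtain ⟨i, a, rfl⟩ := exists_blockIdx_eq M p
    rw [blockOf_blockIdx]
    exact h i a
  · have hrow := h (blockIdx M i a)
    rw [blockOf_blockIdx] at hrow
    exact hrow

end Blocks

theorem leftSubmodule_nest_principal_iff_rank_cond_general
    (D : Type*) [DivisionRing D] (r s : ℕ) (M : Fin r → ℕ) (N : Fin s → ℕ)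
    (hM : ∀ i, 0 < M i)
    (J : AddSubgroup (Matrix (Fin (∑ t, M t)) (Fin (∑ t, N t)) D))
    (R : Fin r → Matrix (Fin (∑ t, N t)) (Fin (∑ t, N t)) D)
    (hdesc : ∀ (i : Fin r) (hi : (i : ℕ) + 1 < r), LRS (R ⟨(i : ℕ) + 1, hi⟩) ≤ LRS (R i))
    (hblk : ∀ (i : Fin r) (j : Fin s), (j : ℕ) < (i : ℕ) →
      ∀ (p : Fin (∑ t, N t)) (b : Fin (N j)), R i p (blockIdx N j b) = 0)
    (hJdef : (J : Set (Matrix (Fin (∑ t, M t)) (Fin (∑ t, N t)) D)) =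
      {A | ∀ i : Fin r, ∃ X : Matrix (Fin (M i)) (Fin (∑ t, N t)) D,
        blockRow M A i = X * R i})
    (k : Fin r) (hk' : ∀ i : Fin r, (k : ℕ) < (i : ℕ) → R i = 0) :
    (∃ A : Matrix (Fin (∑ t, M t)) (Fin (∑ t, N t)) D, IsNest M N A ∧
        (J : Set (Matrix (Fin (∑ t, M t)) (Fin (∑ t, N t)) D)) =
          {B | ∃ P : Matrix (Fin (∑ t, M t)) (Fin (∑ t, M t)) D,
            IsNest M M P ∧ B = P * A}) ↔
      ∀ i : Fin r, (i : ℕ) ≤ (k : ℕ) →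
        Module.finrank D (LRS (R i)) -
            (if hi : (i : ℕ) + 1 < r then
              Module.finrank D (LRS (R ⟨(i : ℕ) + 1, hi⟩)) else 0) ≤ M i := by
  set L := fun i => LRS (R i)
  have hL : Antitone L := Fin.antitone_of_succ_le hdesc
  have hJL : (J : Set (Matrix (Fin (∑ t, M t)) (Fin (∑ t, N t)) D)) =
      {B | ∀ p, B p ∈ L (blockOf M p)} :=
    hJdef.trans (setOf_forall_blockRow_eq_mul_eq R)
  have hprincipal : (∃ A : Matrix (Fin (∑ t, M t)) (Fin (∑ t, N t)) D, IsNest M N A ∧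
        (J : Set (Matrix (Fin (∑ t, M t)) (Fin (∑ t, N t)) D)) =
          {B | ∃ P : Matrix (Fin (∑ t, M t)) (Fin (∑ t, M t)) D,
            IsNest M M P ∧ B = P * A}) ↔
      ∃ v : Fin (∑ t, M t) → Fin (∑ t, N t) → D, ∀ i, tailSpan D (blockOf M) v i = L i := by
    simp_rw [hJL, isNest_iff_blockTriangular,
      setOf_forall_mem_eq_iff_tailSpan_eq (blockOf_surjective M hM) hL]
    refine ⟨fun ⟨A, _, hA⟩ => ⟨A, hA⟩, fun ⟨A, hA⟩ => ⟨A, fun i j a b hji => ?_, hA⟩⟩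
    have hrow : A (blockIdx M i a) ∈ L i :=
      hA i ▸ Submodule.subset_span ⟨_, (blockOf_blockIdx M i a).ge, rfl⟩
    exact apply_eq_zero_of_mem_LRS (hblk i j hji · b) hrow
  rw [hprincipal, exists_tailSpan_eq_iff hL]
  refine forall_congr' fun i => ?_
  have hnext : Module.finrank D (⨆ j > i, L j : Submodule D _) =
      if hi : (i : ℕ) + 1 < r then Module.finrank D (L ⟨(i : ℕ) + 1, hi⟩) else 0 := by
    rw [Fin.iSup_gt_eq_dite hL, apply_dite (fun W : Submodule D _ => Module.finrank D W),
      finrank_bot]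
  rw [hnext, natCard_preimage_blockOf]
  refine ⟨fun h _ => h, fun h => ?_⟩
  rcases le_or_gt (i : ℕ) k with hik | hik
  · exact h hik
  · rw [show L i = ⊥ from (congrArg LRS (hk' i hik)).trans LRS_zero, finrank_bot, Nat.zero_sub]
    exact Nat.zero_le _

/-- A nonzero left submodule `J` of `T_{(M,N)}(D)` with associated
sequence `(R_1, …, R_r)` and largest index `k` with `R_k ≠ 0` is principal (i.e.
`J = T_M·A` for some `A ∈ T_{(M,N)}(D)`) iff `rank(R_i) − rank(R_{i+1}) ≤ m_i` for every
`i ≤ k` (with `R_{k+1} := 0` if `k = r`). -/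
theorem leftSubmodule_nest_principal_iff_rank_cond
    (D : Type*) [DivisionRing D] (r s : ℕ) (M : Fin r → ℕ) (N : Fin s → ℕ)
    (hM : ∀ i, 0 < M i) (hN : ∀ j, 0 < N j)
    (J : AddSubgroup (Matrix (Fin (∑ t, M t)) (Fin (∑ t, N t)) D))
    (hJne : J ≠ ⊥)
    (hJT : ∀ A ∈ J, IsNest M N A)
    (hJ : ∀ (P : Matrix (Fin (∑ t, M t)) (Fin (∑ t, M t)) D)
      (A : Matrix (Fin (∑ t, M t)) (Fin (∑ t, N t)) D),
      IsNest M M P → A ∈ J → P * A ∈ J)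
    (R : Fin r → Matrix (Fin (∑ t, N t)) (Fin (∑ t, N t)) D)
    (hRE : ∀ i, IsRowReducedEchelon (R i))
    (hdesc : ∀ (i : Fin r) (hi : (i : ℕ) + 1 < r), LRS (R ⟨(i : ℕ) + 1, hi⟩) ≤ LRS (R i))
    (hblk : ∀ (i : Fin r) (j : Fin s), (j : ℕ) < (i : ℕ) →
      ∀ (p : Fin (∑ t, N t)) (b : Fin (N j)), R i p (blockIdx N j b) = 0)
    (hJdef : (J : Set (Matrix (Fin (∑ t, M t)) (Fin (∑ t, N t)) D)) =
      {A | ∀ i : Fin r, ∃ X : Matrix (Fin (M i)) (Fin (∑ t, N t)) D,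
        blockRow M A i = X * R i})
    (k : Fin r) (hk : R k ≠ 0) (hk' : ∀ i : Fin r, (k : ℕ) < (i : ℕ) → R i = 0) :
    (∃ A : Matrix (Fin (∑ t, M t)) (Fin (∑ t, N t)) D, IsNest M N A ∧
        (J : Set (Matrix (Fin (∑ t, M t)) (Fin (∑ t, N t)) D)) =
          {B | ∃ P : Matrix (Fin (∑ t, M t)) (Fin (∑ t, M t)) D,
            IsNest M M P ∧ B = P * A}) ↔
      ∀ i : Fin r, (i : ℕ) ≤ (k : ℕ) →
        Module.finrank D (LRS (R i)) -
            (if hi : (i : ℕ) + 1 < r then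
              Module.finrank D (LRS (R ⟨(i : ℕ) + 1, hi⟩)) else 0) ≤ M i :=
  leftSubmodule_nest_principal_iff_rank_cond_general D r s M N hM J R hdesc hblk hJdef k hk'
end
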